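/- Fix α > 0 and T > 0, and let g : [0,T] → ℂ be continuous. Define u(x,t) := (T_t^α g)(x) = ∫_0^t K_α(x,t-τ) g(τ) dτ for x > 0 and 0 < t < T. Then u satisfies ∂_t u(x,t) = x^{2(α-1)/α} ∂_{xx} u(x,t) for all x > 0 and 0 < t < T; for every t ∈ (0,T), u(x,t) → g(t) as x → 0⁺ and u(x,t) → 0 as x → ∞; and for every x > 0, u(x,t) → 0 as t → 0⁺. -/

import Mathlib

/-!
Write `K_α(x,s) = c_α x s^{-p} e^{-b(x)/s}` with `p = α/2 + 1` and `b(x) = α² x^{2/α}/4`.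
Extended by zero to `s ≤ 0`, the profile `s^{-p} e^{-b/s}` is differentiable in `s`, and it and
its derivatives in `s` and `x` are bounded uniformly in `s` and locally uniformly in `x > 0`.
So `u` can be differentiated under the integral sign, and the equation reduces to the pointwise
identity `∂ₛK = x^{2(α-1)/α} ∂ₓₓK` for the kernel.

For the boundary behaviour, the substitution `τ = t - b(x)/w` turns `u(x,t)` into
`Γ(α/2)⁻¹ ∫_{b(x)/t}^∞ e^{-w} w^{α/2-1} g(t - b(x)/w) dw`, an average of `g` against the
Gamma density. Dominated convergence then gives `g(t)` as `b(x) → 0` (that is, `x → 0⁺`), and `0`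
as `b(x)/t → ∞` (that is, `x → ∞` or `t → 0⁺`).
-/

open MeasureTheory Filter Set

/-- The kernel `K_α(x,t) = (α^α/(2^α Γ(α/2))) x t^{-(α/2+1)} exp(-α² x^{2/α}/(4t))`. -/
noncomputable def Kker (α x t : ℝ) : ℝ :=
  (α ^ α / (2 ^ α * Real.Gamma (α / 2))) * x * t ^ (-(α / 2 + 1)) *
    Real.exp (-(α ^ 2) * x ^ (2 / α) / (4 * t))

/-- The transform `(T_t^α g)(x) = ∫_0^t K_α(x,t-τ) g(τ) dτ`. -/
noncomputable def Tt (α t : ℝ) (g : ℝ → ℂ) (x : ℝ) : ℂ :=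
  ∫ τ in Set.Ioo (0 : ℝ) t, (Kker α x (t - τ) : ℂ) * g τ

open Real Topology

section Rpow

variable {r s : ℝ}

lemma rpow_le_rpow_mul_exp {v : ℝ} (hv : 0 ≤ v) (hr : 0 < r) : v ^ r ≤ r ^ r * exp v := by
  have h : v / r ≤ exp (v / r) := by linarith [add_one_le_exp (v / r)]
  calc v ^ r = r ^ r * (v / r) ^ r := by
        rw [div_rpow hv hr.le]; field_simp
    _ ≤ r ^ r * exp (v / r) ^ r := by gcongr
    _ = r ^ r * exp v := by rw [← exp_mul]; field_simp

lemma rpow_neg_add_one (hs : 0 < s) : s ^ (-(r + 1)) = s ^ (-r) / s := by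
  rw [neg_add, rpow_add hs, rpow_neg_one, div_eq_mul_inv]

lemma rpow_neg_add_two (hs : 0 < s) : s ^ (-(r + 2)) = s ^ (-r) / s ^ 2 := by
  rw [neg_add, rpow_add hs, rpow_neg hs.le 2, rpow_two, div_eq_mul_inv]

end Rpow

/-- For `b > 0` this extension by zero is differentiable at `0` (`hasDerivAt_kernelProfile`), so
time derivatives of the transform can be taken under an integral over the fixed interval `(0, T)`.
-/
noncomputable def kernelProfile (b r s : ℝ) : ℝ :=
  if 0 < s then s ^ (-r) * exp (-(b / s)) else 0

section Profile

variable {b r s : ℝ}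

lemma kernelProfile_of_pos (hs : 0 < s) : kernelProfile b r s = s ^ (-r) * exp (-(b / s)) :=
  if_pos hs

lemma kernelProfile_of_nonpos (hs : s ≤ 0) : kernelProfile b r s = 0 :=
  if_neg hs.not_gt

lemma kernelProfile_nonneg : 0 ≤ kernelProfile b r s := by
  unfold kernelProfile; split_ifs <;> positivity

@[fun_prop]
lemma measurable_kernelProfile : Measurable (kernelProfile b r) :=
  Measurable.ite measurableSet_Ioi (by fun_prop) measurable_const

lemma kernelProfile_le (hb : 0 < b) (hr : 0 < r) : kernelProfile b r s ≤ (r / b) ^ r := by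
  rcases le_or_gt s 0 with hs | hs
  · rw [kernelProfile_of_nonpos hs]; positivity
  have key := rpow_le_rpow_mul_exp (div_pos hb hs).le hr
  have hbs : s ^ (-r) = b ^ (-r) * (b / s) ^ r := by
    rw [div_rpow hb.le hs.le, rpow_neg hb.le, rpow_neg hs.le]; field_simp
  rw [kernelProfile_of_pos hs, hbs, div_rpow hr.le hb.le, mul_assoc, div_eq_mul_inv (r ^ r),
    ← rpow_neg hb.le, mul_comm (r ^ r)]
  gcongr
  rw [← le_div_iff₀ (exp_pos _), exp_neg, div_inv_eq_mul]
  exact key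

lemma kernelProfile_anti {b' : ℝ} (hbb : b ≤ b') : kernelProfile b' r s ≤ kernelProfile b r s := by
  rcases le_or_gt s 0 with hs | hs
  · simp [kernelProfile_of_nonpos hs]
  rw [kernelProfile_of_pos hs, kernelProfile_of_pos hs]
  gcongr

lemma abs_kernelProfile_le {b₁ : ℝ} (hb₁ : 0 < b₁) (hb : b₁ ≤ b) (hr : 0 < r) :
    |kernelProfile b r s| ≤ (r / b₁) ^ r := by
  rw [abs_of_nonneg kernelProfile_nonneg]
  exact (kernelProfile_anti hb).trans (kernelProfile_le hb₁ hr)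

lemma tendsto_kernelProfile_zero (hb : 0 < b) : Tendsto (kernelProfile b r) (𝓝 0) (𝓝 0) := by
  nth_rw 1 [← nhdsLE_sup_nhdsGT]
  refine tendsto_sup.2 ⟨?_, ?_⟩
  · exact tendsto_const_nhds.congr' <| eventually_nhdsWithin_of_forall fun s hs =>
      (kernelProfile_of_nonpos hs).symm
  have hv : Tendsto (fun s : ℝ => b / s) (𝓝[>] 0) atTop := by
    simpa [div_eq_mul_inv] using tendsto_inv_nhdsGT_zero.const_mul_atTop hb
  have h := ((tendsto_rpow_mul_exp_neg_mul_atTop_nhds_zero r 1 one_pos).comp hv).const_mul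
    (b ^ (-r))
  rw [mul_zero] at h
  refine h.congr' (eventually_nhdsWithin_of_forall fun s (hs : 0 < s) => ?_)
  rw [kernelProfile_of_pos hs, Function.comp_apply, div_rpow hb.le hs.le, rpow_neg hb.le,
    rpow_neg hs.le, neg_one_mul]
  field_simp

lemma hasDerivAt_kernelProfile (hb : 0 < b) (s : ℝ) :
    HasDerivAt (kernelProfile b r)
      (b * kernelProfile b (r + 2) s - r * kernelProfile b (r + 1) s) s := by
  rcases lt_trichotomy s 0 with hs | rfl | hs
  · rw [kernelProfile_of_nonpos hs.le, kernelProfile_of_nonpos hs.le, mul_zero, mul_zero,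
      sub_zero]
    exact (hasDerivAt_const s 0).congr_of_eventuallyEq <|
      (eventually_lt_nhds hs).mono fun y hy => kernelProfile_of_nonpos hy.le
  · rw [kernelProfile_of_nonpos le_rfl, kernelProfile_of_nonpos le_rfl, mul_zero, mul_zero,
      sub_zero, hasDerivAt_iff_tendsto_slope_zero]
    refine ((tendsto_kernelProfile_zero (r := r + 1) hb).mono_left nhdsWithin_le_nhds).congr' ?_
    refine eventually_nhdsWithin_of_forall fun h _ => ?_
    simp only [zero_add, kernelProfile_of_nonpos le_rfl, sub_zero, smul_eq_mul]
    rcases le_or_gt h 0 with hh | hh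
    · rw [kernelProfile_of_nonpos hh, kernelProfile_of_nonpos hh, mul_zero]
    · rw [kernelProfile_of_pos hh, kernelProfile_of_pos hh, rpow_neg_add_one hh]
      ring
  · have hexp : HasDerivAt (fun s => -(b / s)) (b / s ^ 2) s := by
      simpa [div_eq_mul_inv] using ((hasDerivAt_inv hs.ne').const_mul b).fun_neg
    have hd := (hasDerivAt_rpow_const (p := -r) (Or.inl hs.ne')).mul hexp.exp
    refine (hd.congr_deriv ?_).congr_of_eventuallyEq <|
      (eventually_gt_nhds hs).mono fun y hy => kernelProfile_of_pos hy
    rw [kernelProfile_of_pos hs, kernelProfile_of_pos hs, rpow_neg_add_one hs,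
      rpow_neg_add_two hs, rpow_sub_one hs.ne']
    field_simp
    ring

lemma hasDerivAt_kernelProfile_scale (r s : ℝ) :
    HasDerivAt (fun b => kernelProfile b r s) (-kernelProfile b (r + 1) s) b := by
  rcases le_or_gt s 0 with hs | hs
  · simp only [kernelProfile_of_nonpos hs, neg_zero]
    exact hasDerivAt_const b 0
  simp only [kernelProfile_of_pos hs]
  have hexp : HasDerivAt (fun b => -(b / s)) (-(1 / s)) b := by
    simpa using ((hasDerivAt_id b).div_const s).fun_neg
  refine (hexp.exp.const_mul (s ^ (-r))).congr_deriv ?_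
  rw [rpow_neg_add_one hs]
  ring

lemma abs_sub_mul_kernelProfile_le {b b₁ r₁ r₂ : ℝ} (A B s : ℝ) (hb₁ : 0 < b₁) (hb : b₁ ≤ b)
    (hr₁ : 0 < r₁) (hr₂ : 0 < r₂) :
    |A * kernelProfile b r₁ s - B * kernelProfile b r₂ s| ≤
      |A| * (r₁ / b₁) ^ r₁ + |B| * (r₂ / b₁) ^ r₂ := by
  refine (abs_sub _ _).trans ?_
  rw [abs_mul, abs_mul]
  gcongr <;> exact abs_kernelProfile_le hb₁ hb ‹_›

end Profile

noncomputable def kernelConst (α : ℝ) : ℝ := α ^ α / (2 ^ α * Gamma (α / 2))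

noncomputable def kernelScale (α x : ℝ) : ℝ := α ^ 2 / 4 * x ^ (2 / α)

noncomputable def extKernel (α x s : ℝ) : ℝ :=
  kernelConst α * x * kernelProfile (kernelScale α x) (α / 2 + 1) s

noncomputable def extKernelTimeDeriv (α x s : ℝ) : ℝ :=
  kernelConst α * x * (kernelScale α x * kernelProfile (kernelScale α x) (α / 2 + 1 + 2) s -
    (α / 2 + 1) * kernelProfile (kernelScale α x) (α / 2 + 1 + 1) s)

noncomputable def extKernelSpaceDeriv (α x s : ℝ) : ℝ :=
  kernelConst α * (kernelProfile (kernelScale α x) (α / 2 + 1) s -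
    2 / α * kernelScale α x * kernelProfile (kernelScale α x) (α / 2 + 1 + 1) s)

noncomputable def extKernelSpaceDeriv2 (α x s : ℝ) : ℝ :=
  kernelConst α * (2 / α * kernelScale α x / x) *
    (2 / α * kernelScale α x * kernelProfile (kernelScale α x) (α / 2 + 1 + 2) s -
      (1 + 2 / α) * kernelProfile (kernelScale α x) (α / 2 + 1 + 1) s)

section Kernel

variable {α x s : ℝ}

lemma kernelConst_pos (hα : 0 < α) : 0 < kernelConst α := by
  have := Gamma_pos_of_pos (half_pos hα)
  unfold kernelConst; positivity

lemma kernelScale_pos (hα : 0 < α) (hx : 0 < x) : 0 < kernelScale α x := by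
  unfold kernelScale; positivity

lemma kernelScale_mono (hα : 0 < α) {y : ℝ} (hx : 0 ≤ x) (hxy : x ≤ y) :
    kernelScale α x ≤ kernelScale α y := by
  unfold kernelScale; gcongr

lemma hasDerivAt_kernelScale (hx : 0 < x) :
    HasDerivAt (kernelScale α) (2 / α * kernelScale α x / x) x := by
  refine ((hasDerivAt_rpow_const (p := 2 / α) (Or.inl hx.ne')).const_mul _).congr_deriv ?_
  rw [kernelScale, rpow_sub_one hx.ne']
  ring

lemma kernelConst_mul (hα : 0 < α) (hx : 0 < x) :
    kernelConst α * x = kernelScale α x ^ (α / 2) / Gamma (α / 2) := by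
  have hscale : kernelScale α x ^ (α / 2) = α ^ α / 2 ^ α * x := by
    rw [kernelScale, mul_rpow (by positivity) (by positivity), ← rpow_mul hx.le,
      div_mul_div_comm, mul_comm 2 α, mul_div_mul_left _ _ hα.ne', div_self two_ne_zero,
      rpow_one, show α ^ 2 / 4 = (α / 2) ^ (2 : ℝ) by rw [rpow_two]; ring,
      ← rpow_mul (by positivity), show (2 : ℝ) * (α / 2) = α by ring, div_rpow hα.le zero_le_two]
  rw [hscale, kernelConst]
  field_simp

lemma Kker_eq_extKernel (hs : 0 < s) : Kker α x s = extKernel α x s := by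
  rw [Kker, extKernel, kernelProfile_of_pos hs, kernelConst, kernelScale]
  ring_nf

lemma hasDerivAt_extKernel_time (hα : 0 < α) (hx : 0 < x) (s : ℝ) :
    HasDerivAt (extKernel α x) (extKernelTimeDeriv α x s) s :=
  (hasDerivAt_kernelProfile (kernelScale_pos hα hx) s).const_mul (kernelConst α * x)

lemma hasDerivAt_extKernel_space (hx : 0 < x) (s : ℝ) :
    HasDerivAt (fun y => extKernel α y s) (extKernelSpaceDeriv α x s) x := by
  have hP := (hasDerivAt_kernelProfile_scale (α / 2 + 1) s).comp x
    (hasDerivAt_kernelScale (α := α) hx)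
  refine (((hasDerivAt_id x).const_mul (kernelConst α)).mul hP).congr_deriv ?_
  simp only [extKernelSpaceDeriv, Function.comp_apply, id]
  field_simp
  ring

lemma hasDerivAt_extKernelSpaceDeriv (hx : 0 < x) (s : ℝ) :
    HasDerivAt (fun y => extKernelSpaceDeriv α y s) (extKernelSpaceDeriv2 α x s) x := by
  have hb := hasDerivAt_kernelScale (α := α) hx
  have hP₁ := (hasDerivAt_kernelProfile_scale (α / 2 + 1) s).comp x hb
  have hP₂ := (hasDerivAt_kernelProfile_scale (α / 2 + 1 + 1) s).comp x hb
  refine ((hP₁.sub ((hb.const_mul (2 / α)).mul hP₂)).const_mul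
    (kernelConst α)).congr_deriv ?_
  rw [extKernelSpaceDeriv2, show α / 2 + 1 + 1 + 1 = α / 2 + 1 + 2 by ring]
  simp only [Function.comp_apply]
  ring

lemma extKernelTimeDeriv_eq (hα : 0 < α) (hx : 0 < x) (s : ℝ) :
    extKernelTimeDeriv α x s = x ^ (2 * (α - 1) / α) * extKernelSpaceDeriv2 α x s := by
  have hcoef : x ^ (2 * (α - 1) / α) * (2 / α * kernelScale α x / x) = α / 2 * x := by
    have hpow : x ^ (2 * (α - 1) / α) * x ^ (2 / α) = x ^ 2 := by
      rw [← rpow_add hx, ← rpow_two]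
      congr 1
      field_simp
      ring
    calc x ^ (2 * (α - 1) / α) * (2 / α * kernelScale α x / x)
        = α / 2 * (x ^ (2 * (α - 1) / α) * x ^ (2 / α)) / x := by
          rw [kernelScale]; field_simp; ring
      _ = α / 2 * x := by rw [hpow]; field_simp
  rw [extKernelTimeDeriv, extKernelSpaceDeriv2, ← mul_assoc, mul_left_comm, hcoef]
  field_simp

lemma extKernel_div_mul_div_sq {w : ℝ} (hα : 0 < α) (hx : 0 < x) (hw : 0 < w) :
    extKernel α x (kernelScale α x / w) * (kernelScale α x / w ^ 2) =
      exp (-w) * w ^ (α / 2 - 1) / Gamma (α / 2) := by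
  have hβ := kernelScale_pos hα hx
  have := Gamma_pos_of_pos (half_pos hα)
  rw [extKernel, kernelConst_mul hα hx, kernelProfile_of_pos (div_pos hβ hw),
    div_div_cancel₀ hβ.ne', rpow_neg_add_one (div_pos hβ hw), div_rpow hβ.le hw.le,
    rpow_neg hβ.le, rpow_neg hw.le, rpow_sub_one hw.ne']
  field_simp

end Kernel

section KernelBounds

variable {α x : ℝ}

lemma exists_abs_extKernel_le (hα : 0 < α) (hx : 0 < x) : ∃ C, ∀ s, |extKernel α x s| ≤ C := by
  refine ⟨|kernelConst α * x| * ((α / 2 + 1) / kernelScale α x) ^ (α / 2 + 1), fun s => ?_⟩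
  rw [extKernel, abs_mul]
  gcongr
  exact abs_kernelProfile_le (kernelScale_pos hα hx) le_rfl (by positivity)

lemma exists_abs_extKernelTimeDeriv_le (hα : 0 < α) (hx : 0 < x) :
    ∃ C, ∀ s, |extKernelTimeDeriv α x s| ≤ C := by
  have hb := kernelScale_pos hα hx
  refine ⟨|kernelConst α * x| * (|kernelScale α x| * ((α / 2 + 1 + 2) / kernelScale α x) ^
    (α / 2 + 1 + 2) + |α / 2 + 1| * ((α / 2 + 1 + 1) / kernelScale α x) ^ (α / 2 + 1 + 1)),
    fun s => ?_⟩
  rw [extKernelTimeDeriv, abs_mul]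
  exact mul_le_mul_of_nonneg_left (abs_sub_mul_kernelProfile_le _ _ s hb le_rfl
    (by positivity) (by positivity)) (abs_nonneg _)

lemma exists_abs_extKernelSpaceDeriv_le (hα : 0 < α) {x₁ : ℝ} (hx₁ : 0 < x₁) (x₂ : ℝ) :
    ∃ C, ∀ y ∈ Icc x₁ x₂, ∀ s, |extKernelSpaceDeriv α y s| ≤ C := by
  refine ⟨kernelConst α * (((α / 2 + 1) / kernelScale α x₁) ^ (α / 2 + 1) +
    2 / α * kernelScale α x₂ * ((α / 2 + 1 + 1) / kernelScale α x₁) ^ (α / 2 + 1 + 1)),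
    fun y hy s => ?_⟩
  have hy₀ : 0 < y := hx₁.trans_le hy.1
  have hb₁ := kernelScale_pos hα hx₁
  rw [extKernelSpaceDeriv, abs_mul, abs_of_pos (kernelConst_pos hα)]
  refine mul_le_mul_of_nonneg_left ?_ (kernelConst_pos hα).le
  have := kernelScale_pos hα hy₀
  have h := abs_sub_mul_kernelProfile_le (r₁ := α / 2 + 1) (r₂ := α / 2 + 1 + 1) 1
    (2 / α * kernelScale α y) s hb₁ (kernelScale_mono hα hx₁.le hy.1) (by positivity)
    (by positivity)
  rw [one_mul, abs_one, one_mul, abs_of_pos (a := 2 / α * kernelScale α y) (by positivity)] at h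
  refine h.trans ?_
  gcongr
  exact kernelScale_mono hα hy₀.le hy.2

lemma exists_abs_extKernelSpaceDeriv2_le (hα : 0 < α) {x₁ : ℝ} (hx₁ : 0 < x₁) (x₂ : ℝ) :
    ∃ C, ∀ y ∈ Icc x₁ x₂, ∀ s, |extKernelSpaceDeriv2 α y s| ≤ C := by
  refine ⟨kernelConst α * (2 / α * kernelScale α x₂ / x₁) *
    (2 / α * kernelScale α x₂ * ((α / 2 + 1 + 2) / kernelScale α x₁) ^ (α / 2 + 1 + 2) +
      (1 + 2 / α) * ((α / 2 + 1 + 1) / kernelScale α x₁) ^ (α / 2 + 1 + 1)),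
    fun y hy s => ?_⟩
  have hy₀ : 0 < y := hx₁.trans_le hy.1
  have hb₁ := kernelScale_pos hα hx₁
  have hb₂ := kernelScale_mono hα hy₀.le hy.2
  have hb := kernelScale_pos hα hy₀
  rw [extKernelSpaceDeriv2, abs_mul, abs_mul, abs_of_pos (kernelConst_pos hα),
    abs_of_pos (by positivity : 0 < 2 / α * kernelScale α y / y)]
  have hc := kernelConst_pos hα
  have hx₂ := kernelScale_pos hα (hy₀.trans_le hy.2)
  refine mul_le_mul (mul_le_mul_of_nonneg_left ?_ hc.le) ?_ (abs_nonneg _) (by positivity)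
  · gcongr
    exact hy.1
  refine (abs_sub_mul_kernelProfile_le _ _ s hb₁ (kernelScale_mono hα hx₁.le hy.1)
    (by positivity) (by positivity)).trans ?_
  rw [abs_of_pos (by positivity : 0 < 2 / α * kernelScale α y),
    abs_of_pos (by positivity : (0 : ℝ) < 1 + 2 / α)]
  gcongr

end KernelBounds

section DifferentiationUnderIntegral

variable {β : Type*} [MeasurableSpace β] {μ : Measure β} [IsFiniteMeasure μ]

lemma hasDerivAt_integral_ofReal_mul {F F' : ℝ → β → ℝ} {g : β → ℂ} {x₀ ε C₀ C M : ℝ}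
    (hε : 0 < ε) (hF_meas : ∀ x, AEStronglyMeasurable (F x) μ)
    (hF'_meas : AEStronglyMeasurable (F' x₀) μ) (hF₀ : ∀ a, |F x₀ a| ≤ C₀)
    (hF'_le : ∀ a, ∀ x ∈ Metric.ball x₀ ε, |F' x a| ≤ C)
    (hF' : ∀ a, ∀ x ∈ Metric.ball x₀ ε, HasDerivAt (F · a) (F' x a) x)
    (hg_meas : AEStronglyMeasurable g μ) (hg : ∀ᵐ a ∂μ, ‖g a‖ ≤ M) :
    HasDerivAt (fun x => ∫ a, (F x a : ℂ) * g a ∂μ) (∫ a, (F' x₀ a : ℂ) * g a ∂μ) x₀ := by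
  have hmeas {f : β → ℝ} (hf : AEStronglyMeasurable f μ) :
      AEStronglyMeasurable (fun a => (f a : ℂ) * g a) μ :=
    (Complex.continuous_ofReal.comp_aestronglyMeasurable hf).mul hg_meas
  have hbound {f : β → ℝ} {D : ℝ} {a : β} (hf : |f a| ≤ D) (hga : ‖g a‖ ≤ M) :
      ‖(f a : ℂ) * g a‖ ≤ D * M := by
    rw [norm_mul, Complex.norm_real, Real.norm_eq_abs]
    exact mul_le_mul hf hga (norm_nonneg _) ((abs_nonneg _).trans hf)
  refine (hasDerivAt_integral_of_dominated_loc_of_deriv_le (bound := fun _ => C * M)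
    (Metric.ball_mem_nhds x₀ hε) (.of_forall fun x => hmeas (hF_meas x))
    (.of_bound (hmeas (hF_meas x₀)) (C₀ * M) (hg.mono fun a => hbound (hF₀ a)))
    (hmeas hF'_meas) (hg.mono fun a ha x hx => hbound (hF'_le a x hx) ha) (integrable_const _)
    (.of_forall fun a x hx => (hF' a x hx).ofReal_comp.mul_const (g a))).2

end DifferentiationUnderIntegral

lemma ball_half_subset_Icc {x : ℝ} : Metric.ball x (x / 2) ⊆ Icc (x / 2) (3 * x / 2) := by
  intro y hy
  rw [Metric.mem_ball, Real.dist_eq, abs_lt] at hy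
  constructor <;> linarith

section HeatEquation

variable {μ : Measure ℝ} [IsFiniteMeasure μ] {α x M : ℝ} {g : ℝ → ℂ}

lemma hasDerivAt_integral_extKernel_time (hα : 0 < α) (hx : 0 < x)
    (hg_meas : AEStronglyMeasurable g μ) (hg : ∀ᵐ τ ∂μ, ‖g τ‖ ≤ M) (t : ℝ) :
    HasDerivAt (fun t => ∫ τ, (extKernel α x (t - τ) : ℂ) * g τ ∂μ)
      (∫ τ, (extKernelTimeDeriv α x (t - τ) : ℂ) * g τ ∂μ) t := by
  obtain ⟨C₀, hC₀⟩ := exists_abs_extKernel_le hα hx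
  obtain ⟨C, hC⟩ := exists_abs_extKernelTimeDeriv_le hα hx
  refine hasDerivAt_integral_ofReal_mul (F := fun t τ => extKernel α x (t - τ))
    (F' := fun t τ => extKernelTimeDeriv α x (t - τ)) one_pos (fun t => ?_) ?_ (fun τ => hC₀ _)
    (fun τ _ _ => hC _) (fun τ t' _ => (hasDerivAt_extKernel_time hα hx _).comp_sub_const t' τ)
    hg_meas hg
  · exact Measurable.aestronglyMeasurable (by unfold extKernel; fun_prop)
  · exact Measurable.aestronglyMeasurable (by unfold extKernelTimeDeriv; fun_prop)

lemma hasDerivAt_integral_extKernel_space (hα : 0 < α) (hx : 0 < x)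
    (hg_meas : AEStronglyMeasurable g μ) (hg : ∀ᵐ τ ∂μ, ‖g τ‖ ≤ M) (t : ℝ) :
    HasDerivAt (fun y => ∫ τ, (extKernel α y (t - τ) : ℂ) * g τ ∂μ)
      (∫ τ, (extKernelSpaceDeriv α x (t - τ) : ℂ) * g τ ∂μ) x := by
  obtain ⟨C₀, hC₀⟩ := exists_abs_extKernel_le hα hx
  obtain ⟨C, hC⟩ := exists_abs_extKernelSpaceDeriv_le hα (half_pos hx) (3 * x / 2)
  refine hasDerivAt_integral_ofReal_mul (F := fun y τ => extKernel α y (t - τ))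
    (F' := fun y τ => extKernelSpaceDeriv α y (t - τ)) (half_pos hx) (fun y => ?_) ?_
    (fun τ => hC₀ _) (fun τ y hy => hC y (ball_half_subset_Icc hy) _) (fun τ y hy => ?_)
    hg_meas hg
  · exact Measurable.aestronglyMeasurable (by unfold extKernel; fun_prop)
  · exact Measurable.aestronglyMeasurable (by unfold extKernelSpaceDeriv; fun_prop)
  · exact hasDerivAt_extKernel_space ((half_pos hx).trans_le (ball_half_subset_Icc hy).1) _

lemma hasDerivAt_integral_extKernelSpaceDeriv (hα : 0 < α) (hx : 0 < x)
    (hg_meas : AEStronglyMeasurable g μ) (hg : ∀ᵐ τ ∂μ, ‖g τ‖ ≤ M) (t : ℝ) :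
    HasDerivAt (fun y => ∫ τ, (extKernelSpaceDeriv α y (t - τ) : ℂ) * g τ ∂μ)
      (∫ τ, (extKernelSpaceDeriv2 α x (t - τ) : ℂ) * g τ ∂μ) x := by
  obtain ⟨C₀, hC₀⟩ := exists_abs_extKernelSpaceDeriv_le hα hx x
  obtain ⟨C, hC⟩ := exists_abs_extKernelSpaceDeriv2_le hα (half_pos hx) (3 * x / 2)
  refine hasDerivAt_integral_ofReal_mul (F := fun y τ => extKernelSpaceDeriv α y (t - τ))
    (F' := fun y τ => extKernelSpaceDeriv2 α y (t - τ)) (half_pos hx) (fun y => ?_) ?_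
    (fun τ => hC₀ x (left_mem_Icc.2 le_rfl) _) (fun τ y hy => hC y (ball_half_subset_Icc hy) _)
    (fun τ y hy => ?_) hg_meas hg
  · exact Measurable.aestronglyMeasurable (by unfold extKernelSpaceDeriv; fun_prop)
  · exact Measurable.aestronglyMeasurable (by unfold extKernelSpaceDeriv2; fun_prop)
  · exact hasDerivAt_extKernelSpaceDeriv ((half_pos hx).trans_le (ball_half_subset_Icc hy).1) _

lemma integral_extKernel_heat (hα : 0 < α) (hx : 0 < x)
    (hg_meas : AEStronglyMeasurable g μ) (hg : ∀ᵐ τ ∂μ, ‖g τ‖ ≤ M) (t : ℝ) :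
    deriv (fun t => ∫ τ, (extKernel α x (t - τ) : ℂ) * g τ ∂μ) t =
      (x ^ (2 * (α - 1) / α) : ℝ) *
        iteratedDeriv 2 (fun y => ∫ τ, (extKernel α y (t - τ) : ℂ) * g τ ∂μ) x := by
  have hfirst : deriv (fun y => ∫ τ, (extKernel α y (t - τ) : ℂ) * g τ ∂μ) =ᶠ[𝓝 x]
      fun y => ∫ τ, (extKernelSpaceDeriv α y (t - τ) : ℂ) * g τ ∂μ :=
    (eventually_gt_nhds hx).mono fun y hy =>
      (hasDerivAt_integral_extKernel_space hα hy hg_meas hg t).deriv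
  rw [(hasDerivAt_integral_extKernel_time hα hx hg_meas hg t).deriv, iteratedDeriv_succ,
    iteratedDeriv_one, hfirst.deriv_eq,
    (hasDerivAt_integral_extKernelSpaceDeriv hα hx hg_meas hg t).deriv, ← integral_const_mul]
  congr 1 with τ
  rw [extKernelTimeDeriv_eq hα hx]
  push_cast
  ring

end HeatEquation

section TailIntegrals

lemma tendsto_setIntegral_Ioi_mul {ι : Type*} {l : Filter ι} [l.IsCountablyGenerated]
    {f : ℝ → ℝ} (hf : IntegrableOn f (Ioi 0)) {a : ι → ℝ} {h : ι → ℝ → ℂ} {H : ℝ → ℂ} {M : ℝ}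
    (ha : ∀ᶠ i in l, 0 ≤ a i)
    (h_meas : ∀ᶠ i in l, AEStronglyMeasurable (h i) (volume.restrict (Ioi (a i))))
    (h_le : ∀ᶠ i in l, ∀ w ∈ Ioi (a i), ‖h i w‖ ≤ M)
    (h_lim : ∀ w ∈ Ioi 0, Tendsto (fun i => (Ioi (a i)).indicator (h i) w) l (𝓝 (H w))) :
    Tendsto (fun i => ∫ w in Ioi (a i), (f w : ℂ) * h i w) l
      (𝓝 (∫ w in Ioi 0, (f w : ℂ) * H w)) := by
  have hf' : AEStronglyMeasurable (fun w => (f w : ℂ)) (volume.restrict (Ioi 0)) :=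
    Complex.continuous_ofReal.comp_aestronglyMeasurable hf.aestronglyMeasurable
  refine (tendsto_integral_filter_of_dominated_convergence
    (F := fun i w => (Ioi (a i)).indicator (fun w => (f w : ℂ) * h i w) w) (fun w => ‖f w‖ * M)
    ?_ ?_
    (hf.norm.mul_const M) ?_).congr' ?_
  · filter_upwards [ha, h_meas] with i hai hi
    refine (aestronglyMeasurable_indicator_iff measurableSet_Ioi).2 ?_
    refine ((hf'.mono_set (Ioi_subset_Ioi hai)).mul hi).mono_measure ?_
    exact Measure.restrict_mono subset_rfl Measure.restrict_le_self
  · filter_upwards [h_le] with i hi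
    refine .of_forall fun w => ?_
    by_cases hw : w ∈ Ioi (a i)
    · rw [indicator_of_mem hw, norm_mul, Complex.norm_real]
      exact mul_le_mul_of_nonneg_left (hi w hw) (norm_nonneg _)
    · have hM : 0 ≤ M := (norm_nonneg _).trans (hi (a i + 1) (mem_Ioi.2 (lt_add_one _)))
      rw [indicator_of_notMem hw, norm_zero]
      positivity
  · refine (ae_restrict_iff' measurableSet_Ioi).2 (.of_forall fun w hw => ?_)
    simp_rw [indicator_mul_right]
    exact (h_lim w hw).const_mul _
  · filter_upwards [ha] with i hi
    rw [setIntegral_indicator measurableSet_Ioi, Ioi_inter_Ioi, max_eq_right hi]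

variable {g : ℝ → ℂ} {T β t : ℝ}

lemma mapsTo_sub_div_Ioi (hβ : 0 < β) (ht : 0 < t) :
    MapsTo (fun w => t - β / w) (Ioi (β / t)) (Ioo 0 t) := by
  intro w hw
  have hw₀ : 0 < w := (div_pos hβ ht).trans hw
  rw [mem_Ioi, div_lt_iff₀ ht, ← div_lt_iff₀' hw₀] at hw
  exact ⟨sub_pos.2 hw, sub_lt_self _ (div_pos hβ hw₀)⟩

lemma continuousOn_comp_sub_div (hg : ContinuousOn g (Icc 0 T)) (hβ : 0 < β) (ht : t ∈ Ioc 0 T) :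
    ContinuousOn (fun w => g (t - β / w)) (Ioi (β / t)) := by
  refine hg.comp (continuousOn_const.sub (continuousOn_const.div continuousOn_id fun w hw => ?_))
    ((mapsTo_sub_div_Ioi hβ ht.1).mono_right
      (Ioo_subset_Icc_self.trans (Icc_subset_Icc_right ht.2)))
  exact ((div_pos hβ ht.1).trans hw).ne'

lemma norm_comp_sub_div_le {M : ℝ} (hM : ∀ τ ∈ Icc 0 T, ‖g τ‖ ≤ M) (hβ : 0 < β) (ht : t ∈ Ioc 0 T)
    {w : ℝ} (hw : w ∈ Ioi (β / t)) : ‖g (t - β / w)‖ ≤ M :=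
  hM _ (Ioo_subset_Icc_self.trans (Icc_subset_Icc_right ht.2) (mapsTo_sub_div_Ioi hβ ht.1 hw))

lemma tendsto_setIntegral_Ioi_mul_comp_sub_div {f : ℝ → ℝ} (hf : IntegrableOn f (Ioi 0))
    (hg : ContinuousOn g (Icc 0 T)) (ht : t ∈ Ioc 0 T) :
    Tendsto (fun β => ∫ w in Ioi (β / t), (f w : ℂ) * g (t - β / w)) (𝓝[>] 0)
      (𝓝 ((∫ w in Ioi 0, (f w : ℂ)) * g t)) := by
  obtain ⟨M, hM⟩ := isCompact_Icc.exists_bound_of_continuousOn hg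
  rw [← integral_mul_const]
  refine tendsto_setIntegral_Ioi_mul hf (H := fun _ => g t) (M := M)
    (eventually_nhdsWithin_of_forall fun β (hβ : 0 < β) => div_nonneg hβ.le ht.1.le)
    (eventually_nhdsWithin_of_forall fun β hβ =>
      (continuousOn_comp_sub_div hg hβ ht).aestronglyMeasurable measurableSet_Ioi)
    (eventually_nhdsWithin_of_forall fun β hβ w hw => norm_comp_sub_div_le hM hβ ht hw)
    fun w (hw : 0 < w) => ?_
  have hev : ∀ᶠ β in 𝓝[>] 0, 0 < β ∧ w ∈ Ioi (β / t) := by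
    filter_upwards [Ioo_mem_nhdsGT (mul_pos hw ht.1)] with β hβ
    exact ⟨hβ.1, (div_lt_iff₀ ht.1).2 hβ.2⟩
  have hsub : Tendsto (fun β => t - β / w) (𝓝[>] 0) (𝓝[Icc 0 T] t) := by
    refine tendsto_nhdsWithin_iff.2 ⟨tendsto_nhdsWithin_of_tendsto_nhds ?_, hev.mono fun β hβ =>
      Ioo_subset_Icc_self.trans (Icc_subset_Icc_right ht.2) (mapsTo_sub_div_Ioi hβ.1 ht.1 hβ.2)⟩
    exact (show Continuous fun β : ℝ => t - β / w by fun_prop).tendsto' 0 t (by simp)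
  exact ((hg t ⟨ht.1.le, ht.2⟩).tendsto.comp hsub).congr' <| hev.mono fun β hβ =>
    (indicator_of_mem hβ.2 _).symm

lemma tendsto_setIntegral_Ioi_mul_comp_sub_div_of_atTop {ι : Type*} {l : Filter ι}
    [l.IsCountablyGenerated] {f : ℝ → ℝ} (hf : IntegrableOn f (Ioi 0))
    (hg : ContinuousOn g (Icc 0 T)) {β t : ι → ℝ} (hβ : ∀ᶠ i in l, 0 < β i)
    (ht : ∀ᶠ i in l, t i ∈ Ioc 0 T) (h_top : Tendsto (fun i => β i / t i) l atTop) :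
    Tendsto (fun i => ∫ w in Ioi (β i / t i), (f w : ℂ) * g (t i - β i / w)) l (𝓝 0) := by
  obtain ⟨M, hM⟩ := isCompact_Icc.exists_bound_of_continuousOn hg
  have h := tendsto_setIntegral_Ioi_mul hf (H := 0) (M := M) (h_top.eventually_ge_atTop 0)
    (hβ.and ht |>.mono fun i hi =>
      (continuousOn_comp_sub_div hg hi.1 hi.2).aestronglyMeasurable measurableSet_Ioi)
    (hβ.and ht |>.mono fun i hi w hw => norm_comp_sub_div_le hM hi.1 hi.2 hw)
    fun w _ => tendsto_const_nhds.congr' <| (h_top.eventually_gt_atTop w).mono fun i hi =>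
      (indicator_of_notMem (not_lt.2 hi.le) _).symm
  simpa using h

end TailIntegrals

section Transform

variable {α T t x : ℝ} {g : ℝ → ℂ}

lemma Tt_eq_integral_extKernel (htT : t ≤ T) :
    Tt α t g x = ∫ τ in Ioo 0 T, (extKernel α x (t - τ) : ℂ) * g τ := by
  rw [Tt, setIntegral_congr_fun measurableSet_Ioo fun τ hτ => by
    rw [Kker_eq_extKernel (sub_pos.2 hτ.2)]]
  refine (setIntegral_eq_of_subset_of_forall_sdiff_eq_zero measurableSet_Ioo
    (Ioo_subset_Ioo_right htT) fun τ hτ => ?_).symm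
  have hτt : t - τ ≤ 0 := sub_nonpos.2 (not_lt.1 fun h => hτ.2 ⟨hτ.1.1, h⟩)
  rw [extKernel, kernelProfile_of_nonpos hτt, mul_zero, Complex.ofReal_zero, zero_mul]

lemma Tt_heat (hα : 0 < α) (hg : ContinuousOn g (Icc 0 T)) (hx : 0 < x) (htT : t < T) :
    deriv (fun s => Tt α s g x) t =
      (x ^ (2 * (α - 1) / α) : ℝ) * iteratedDeriv 2 (fun y => Tt α t g y) x := by
  obtain ⟨M, hM⟩ := isCompact_Icc.exists_bound_of_continuousOn hg
  have hnear : (fun s => Tt α s g x) =ᶠ[𝓝 t]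
      fun s => ∫ τ in Ioo 0 T, (extKernel α x (s - τ) : ℂ) * g τ :=
    (eventually_lt_nhds htT).mono fun s hs => Tt_eq_integral_extKernel hs.le
  rw [hnear.deriv_eq, funext fun y => Tt_eq_integral_extKernel (α := α) (g := g) (x := y) htT.le]
  exact integral_extKernel_heat hα hx
    ((hg.mono Ioo_subset_Icc_self).aestronglyMeasurable measurableSet_Ioo)
    (ae_restrict_of_forall_mem measurableSet_Ioo fun τ hτ => hM τ (Ioo_subset_Icc_self hτ)) t

lemma Tt_eq_gamma_integral (hα : 0 < α) (hx : 0 < x) (ht : 0 < t) :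
    Tt α t g x = (Gamma (α / 2) : ℂ)⁻¹ * ∫ w in Ioi (kernelScale α x / t),
      ((exp (-w) * w ^ (α / 2 - 1) : ℝ) : ℂ) * g (t - kernelScale α x / w) := by
  set β := kernelScale α x
  have hβ : 0 < β := kernelScale_pos hα hx
  have himage : (fun w => t - β / w) '' Ioi (β / t) = Ioo 0 t := by
    refine (mapsTo_sub_div_Ioi hβ ht).image_subset.antisymm fun τ hτ => ⟨β / (t - τ), ?_, ?_⟩
    · rw [mem_Ioi, div_lt_div_iff_of_pos_left hβ ht (sub_pos.2 hτ.2)]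
      exact sub_lt_self _ hτ.1
    · simp only
      rw [div_div_cancel₀ hβ.ne', sub_sub_cancel]
  have hinj : InjOn (fun w => t - β / w) (Ioi (β / t)) := fun w₁ _ w₂ _ h => by
    simpa [div_eq_mul_inv, hβ.ne'] using h
  have hderiv : ∀ w ∈ Ioi (β / t), HasDerivWithinAt (fun w => t - β / w) (β / w ^ 2)
      (Ioi (β / t)) w := fun w hw => by
    have hw₀ : w ≠ 0 := ((div_pos hβ ht).trans hw).ne'
    refine (((hasDerivAt_inv hw₀).const_mul β).const_sub t).hasDerivWithinAt.congr_deriv ?_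
    ring
  rw [Tt, ← himage, integral_image_eq_integral_abs_deriv_smul measurableSet_Ioi hderiv hinj,
    ← integral_const_mul]
  refine setIntegral_congr_fun measurableSet_Ioi fun w hw => ?_
  have hw₀ : 0 < w := (div_pos hβ ht).trans hw
  have hΓ : (Gamma (α / 2) : ℂ) ≠ 0 := Complex.ofReal_ne_zero.2 (Gamma_pos_of_pos (half_pos hα)).ne'
  simp only [sub_sub_cancel, Complex.real_smul]
  rw [abs_of_pos (by positivity), Kker_eq_extKernel (div_pos hβ hw₀), ← mul_assoc,
    ← Complex.ofReal_mul, mul_comm (β / w ^ 2), extKernel_div_mul_div_sq hα hx hw₀]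
  push_cast
  field_simp

lemma tendsto_Tt_boundary (hα : 0 < α) (hg : ContinuousOn g (Icc 0 T)) (ht : 0 < t)
    (htT : t ≤ T) : Tendsto (fun x => Tt α t g x) (𝓝[>] 0) (𝓝 (g t)) := by
  have hΓ : (Gamma (α / 2) : ℂ) ≠ 0 :=
    Complex.ofReal_ne_zero.2 (Gamma_pos_of_pos (half_pos hα)).ne'
  have hscale : Tendsto (kernelScale α) (𝓝[>] 0) (𝓝[>] 0) := by
    refine tendsto_nhdsWithin_iff.2 ⟨tendsto_nhdsWithin_of_tendsto_nhds ?_,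
      eventually_nhdsWithin_of_forall fun x hx => kernelScale_pos hα hx⟩
    have := ((continuousAt_rpow_const 0 (2 / α) (Or.inr (by positivity))).const_mul
      (α ^ 2 / 4)).tendsto
    rwa [zero_rpow (by positivity), mul_zero] at this
  have h := ((tendsto_setIntegral_Ioi_mul_comp_sub_div (GammaIntegral_convergent (half_pos hα))
    hg ⟨ht, htT⟩).comp hscale).const_mul (Gamma (α / 2) : ℂ)⁻¹
  rw [integral_complex_ofReal, ← Gamma_eq_integral (half_pos hα), inv_mul_cancel_left₀ hΓ] at h
  exact h.congr' (eventually_nhdsWithin_of_forall fun x hx => (Tt_eq_gamma_integral hα hx ht).symm)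

lemma tendsto_Tt_atTop (hα : 0 < α) (hg : ContinuousOn g (Icc 0 T)) (ht : 0 < t)
    (htT : t ≤ T) : Tendsto (fun x => Tt α t g x) atTop (𝓝 0) := by
  have hscale : Tendsto (fun x => kernelScale α x / t) atTop atTop :=
    ((tendsto_rpow_atTop (by positivity)).const_mul_atTop (by positivity)).atTop_div_const ht
  have h := (tendsto_setIntegral_Ioi_mul_comp_sub_div_of_atTop (GammaIntegral_convergent
    (half_pos hα)) hg ((eventually_gt_atTop 0).mono fun x hx => kernelScale_pos hα hx)
    (.of_forall fun _ => ⟨ht, htT⟩) hscale).const_mul (Gamma (α / 2) : ℂ)⁻¹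
  rw [mul_zero] at h
  exact h.congr' ((eventually_gt_atTop 0).mono fun x hx => (Tt_eq_gamma_integral hα hx ht).symm)

lemma tendsto_Tt_initial (hα : 0 < α) (hT : 0 < T) (hg : ContinuousOn g (Icc 0 T)) (hx : 0 < x) :
    Tendsto (fun t => Tt α t g x) (𝓝[>] 0) (𝓝 0) := by
  have hβ := kernelScale_pos hα hx
  have hscale : Tendsto (fun t => kernelScale α x / t) (𝓝[>] 0) atTop := by
    simpa [div_eq_mul_inv] using tendsto_inv_nhdsGT_zero.const_mul_atTop hβ
  have h := (tendsto_setIntegral_Ioi_mul_comp_sub_div_of_atTop (GammaIntegral_convergent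
    (half_pos hα)) hg (.of_forall fun _ => hβ) (Ioc_mem_nhdsGT hT) hscale).const_mul
    (Gamma (α / 2) : ℂ)⁻¹
  rw [mul_zero] at h
  exact h.congr' (eventually_nhdsWithin_of_forall fun t ht => (Tt_eq_gamma_integral hα hx ht).symm)

end Transform

theorem stmt5 (α T : ℝ) (hα : 0 < α) (hT : 0 < T)
    (g : ℝ → ℂ) (hg : ContinuousOn g (Set.Icc 0 T))
    (u : ℝ → ℝ → ℂ) (hu : ∀ x t : ℝ, u x t = Tt α t g x) :
    (∀ x t : ℝ, 0 < x → 0 < t → t < T →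
      deriv (fun s => u x s) t =
        (x ^ (2 * (α - 1) / α) : ℝ) * iteratedDeriv 2 (fun y => u y t) x) ∧
    (∀ t : ℝ, 0 < t → t < T →
      Tendsto (fun x => u x t) (nhdsWithin 0 (Set.Ioi 0)) (nhds (g t))) ∧
    (∀ t : ℝ, 0 < t → t < T → Tendsto (fun x => u x t) atTop (nhds 0)) ∧
    (∀ x : ℝ, 0 < x →
      Tendsto (fun t => u x t) (nhdsWithin 0 (Set.Ioi 0)) (nhds 0)) := by
  obtain rfl : u = fun x t => Tt α t g x := funext₂ hu
  exact ⟨fun x t hx _ htT => Tt_heat hα hg hx htT,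
    fun t ht htT => tendsto_Tt_boundary hα hg ht htT.le,
    fun t ht htT => tendsto_Tt_atTop hα hg ht htT.le,
    fun x hx => tendsto_Tt_initial hα hT hg hx⟩
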